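/- arXiv:1808.02263 — 3 statements merged into one kernel-verified Lean document; each statement's English description precedes it below -/
import Mathlib

section
/- For integers a and positive integers b with gcd(a,b)=1, the normalized Dedekind sum S(a,b) = 12·s(a,b) is an integer if and only if b divides a²+1, and in that case S(a,b) = 0. -/
/-- The sawtooth function ((x)). -/
def saw (x : ℚ) : ℚ := if x.den = 1 then 0 else x - ⌊x⌋ - 1/2

/-- The classical Dedekind sum s(a,b). -/
def dedS (a : ℤ) (b : ℕ) : ℚ :=
  ∑ k ∈ Finset.Icc 1 b, saw ((k : ℚ) / b) * saw ((a : ℚ) * k / b)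

/-- The normalized Dedekind sum S(a,b) = 12 s(a,b). -/
def S (a : ℤ) (b : ℕ) : ℚ := 12 * dedS a b

/-! Write `r k = a k mod b` and `T = ∑_{k<b} k r k`. Since `k ↦ r k` permutes the residues mod `b`,
expanding the products of sawtooth values gives `b² S(a,b) = 3 (4T - b²(b-1))`, so `S(a,b)` is an
integer iff `b² ∣ 12 T`.

Since `r k ≡ a k (mod b)` and `∑ (r k)² = ∑ k²`, summing `2a k r k - (a²+1) k² = (r k² - k²) - (a k - r k)²`
gives `2aT ≡ (a²+1) ∑ k² (mod b²)`; as `6 ∑ k² = b(b-1)(2b-1) ≡ b (mod b²)`, `b² ∣ 12T` forces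
`b ∣ a²+1`. Conversely, if `a² ≡ -1 (mod b)` then `a r k ≡ -k`, so reindexing `T` along `k ↦ r k`
gives `T = ∑ r k (b - k) = b ∑ k - T`, i.e. `4T = b²(b-1)` and `S(a,b) = 0`. -/

open Finset

lemma sum_range_natCast_zmod {M : Type*} [AddCommMonoid M] (n : ℕ) [NeZero n] (f : ZMod n → M) :
    ∑ k ∈ range n, f k = ∑ x : ZMod n, f x :=
  sum_nbij' (fun k => (k : ZMod n)) ZMod.val (by simp) (by simp [ZMod.val_lt])
    (fun _ hk => ZMod.val_cast_of_lt (mem_range.1 hk)) (fun x _ => ZMod.natCast_zmod_val x)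
    (fun _ _ => rfl)

lemma sum_range_comp_mul_emod {M : Type*} [AddCommMonoid M] {a : ℤ} {b : ℕ} (hb : 0 < b)
    (ha : IsCoprime a b) (g : ℤ → M) :
    ∑ k ∈ range b, g (a * k % b) = ∑ k ∈ range b, g k := by
  have : NeZero b := ⟨hb.ne'⟩
  obtain ⟨u, hu⟩ : IsUnit (a : ZMod b) :=
    isCoprime_zero_right.1 (by simpa using ha.intCast (R := ZMod b))
  calc ∑ k ∈ range b, g (a * k % b) = ∑ x : ZMod b, g ((u * x : ZMod b).val) := by
        rw [← sum_range_natCast_zmod]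
        refine sum_congr rfl fun k _ => ?_
        rw [hu, ← ZMod.val_intCast]; push_cast; rfl
    _ = ∑ x : ZMod b, g (x.val) :=
        Equiv.sum_comp (Units.mulLeft u) (fun x : ZMod b => g ((x.val : ℕ) : ℤ))
    _ = ∑ k ∈ range b, g k := by
        rw [← sum_range_natCast_zmod]
        refine sum_congr rfl fun k hk => ?_
        rw [ZMod.val_cast_of_lt (mem_range.1 hk)]

lemma two_mul_sum_range_id (R : Type*) [CommRing R] (n : ℕ) :
    2 * ∑ k ∈ range n, (k : R) = n * (n - 1) := by
  induction n with
  | zero => simp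
  | succ n ih => rw [sum_range_succ, mul_add, ih]; push_cast; ring

lemma six_mul_sum_range_sq (R : Type*) [CommRing R] (n : ℕ) :
    6 * ∑ k ∈ range n, (k : R) ^ 2 = n * (n - 1) * (2 * n - 1) := by
  induction n with
  | zero => simp
  | succ n ih => rw [sum_range_succ, mul_add, ih]; push_cast; ring

lemma two_mul_saw_intCast_div {b : ℕ} (hb : 0 < b) {m : ℤ} (hm : ¬ (b : ℤ) ∣ m) :
    2 * b * saw (m / b) = 2 * (m % b : ℤ) - b := by
  have hden : ((m : ℚ) / b).den ≠ 1 := by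
    simpa using (Rat.den_div_intCast_eq_one_iff m b (by positivity)).not.2 hm
  rw [saw, if_neg hden, Rat.floor_intCast_div_natCast, Int.emod_def]
  push_cast
  field_simp

def crossSum (a : ℤ) (b : ℕ) : ℤ := ∑ k ∈ range b, k * (a * k % b)

variable {a : ℤ} {b : ℕ}

lemma sum_Ico_two_mul_sub_mul (hb : 0 < b) (ha : IsCoprime a b) :
    ∑ k ∈ Ico 1 b, (2 * k - b) * (2 * (a * k % b) - b) = 4 * crossSum a b - b ^ 2 * (b - 1) := by
  have hperm : ∑ k ∈ range b, a * k % b = ∑ k ∈ range b, (k : ℤ) :=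
    sum_range_comp_mul_emod hb ha id
  have hsplit : ∑ k ∈ range b, (2 * k - b) * (2 * (a * k % b) - b)
      = b ^ 2 + ∑ k ∈ Ico 1 b, (2 * k - b) * (2 * (a * k % b) - b) := by
    rw [range_eq_Ico, sum_eq_sum_Ico_succ_bot hb]
    congr 1
    simp only [CharP.cast_eq_zero, mul_zero, Int.zero_emod]
    ring
  have hexpand : ∑ k ∈ range b, (2 * k - b) * (2 * (a * k % b) - b)
      = 4 * crossSum a b - 2 * b * ∑ k ∈ range b, (k : ℤ)
        - 2 * b * ∑ k ∈ range b, a * k % b + b * b ^ 2 := by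
    rw [crossSum, mul_sum, mul_sum, mul_sum, ← sum_sub_distrib, ← sum_sub_distrib,
      show (b : ℤ) * b ^ 2 = ∑ _k ∈ range b, (b : ℤ) ^ 2 by simp, ← sum_add_distrib]
    exact sum_congr rfl fun k _ => by ring
  linear_combination hexpand - hsplit - 2 * b * hperm - 2 * b * two_mul_sum_range_id ℤ b

lemma sq_mul_S_eq (hb : 0 < b) (ha : IsCoprime a b) :
    (b : ℚ) ^ 2 * S a b = (3 * (4 * crossSum a b - b ^ 2 * (b - 1)) : ℤ) := by
  have hterm : ∀ k ∈ Ico 1 b, 4 * b ^ 2 * (saw ((k : ℚ) / b) * saw ((a : ℚ) * k / b))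
      = (((2 * k - b) * (2 * (a * k % b) - b) : ℤ) : ℚ) := by
    intro k hk
    obtain ⟨hk1, hkb⟩ := mem_Ico.1 hk
    have hk : ¬ (b : ℤ) ∣ k := fun h => by have := Int.le_of_dvd (by omega) h; omega
    have hak : ¬ (b : ℤ) ∣ a * k := fun h => hk (ha.symm.dvd_of_dvd_mul_left h)
    have e1 := two_mul_saw_intCast_div hb hk
    have e2 := two_mul_saw_intCast_div hb hak
    rw [Int.emod_eq_of_lt (by omega) (by omega)] at e1
    push_cast at e1 e2 ⊢
    linear_combination (2 * b * saw ((a : ℚ) * k / b)) * e1 + (2 * k - b : ℚ) * e2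
  have hlast : saw ((b : ℚ) / b) = 0 := by simp [saw, div_self (by positivity : (b : ℚ) ≠ 0)]
  rw [S, dedS, ← Ico_add_one_right_eq_Icc, sum_Ico_succ_top (by omega), hlast, zero_mul,
    add_zero, ← sum_Ico_two_mul_sub_mul hb ha, Int.cast_mul, Int.cast_sum, ← sum_congr rfl hterm,
    mul_sum, mul_sum, mul_sum]
  push_cast
  exact sum_congr rfl fun k _ => by ring

lemma sq_dvd_two_mul_crossSum_sub (hb : 0 < b) (ha : IsCoprime a b) :
    (b : ℤ) ^ 2 ∣ 2 * a * crossSum a b - (a ^ 2 + 1) * ∑ k ∈ range b, (k : ℤ) ^ 2 := by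
  have hperm : ∑ k ∈ range b, (a * k % b) ^ 2 = ∑ k ∈ range b, (k : ℤ) ^ 2 :=
    sum_range_comp_mul_emod hb ha (· ^ 2)
  have hterm : ∀ k : ℕ, 2 * a * (k * (a * k % b)) - (a ^ 2 + 1) * k ^ 2
      = ((a * k % b) ^ 2 - k ^ 2) - (a * k - a * k % b) ^ 2 := fun k => by ring
  have hsum : 2 * a * crossSum a b - (a ^ 2 + 1) * ∑ k ∈ range b, (k : ℤ) ^ 2
      = -∑ k ∈ range b, (a * k - a * k % b) ^ 2 := by
    rw [crossSum, mul_sum, mul_sum, ← sum_sub_distrib, sum_congr rfl fun k _ => hterm k,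
      sum_sub_distrib, sum_sub_distrib, hperm, sub_self, zero_sub]
  rw [hsum, dvd_neg]
  exact dvd_sum fun k _ => pow_dvd_pow_of_dvd Int.dvd_self_sub_emod 2

lemma dvd_sq_add_one_of_sq_dvd_crossSum (hb : 0 < b) (ha : IsCoprime a b)
    (h : (b : ℤ) ^ 2 ∣ 12 * crossSum a b) : (b : ℤ) ∣ a ^ 2 + 1 := by
  have hb' : (b : ℤ) ≠ 0 := by positivity
  have hsq : (b : ℤ) ^ 2 ∣ b * ((a ^ 2 + 1) * ((b - 1) * (2 * b - 1))) := by
    rw [show (b : ℤ) * ((a ^ 2 + 1) * ((b - 1) * (2 * b - 1))) = a * (12 * crossSum a b)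
        - 6 * (2 * a * crossSum a b - (a ^ 2 + 1) * ∑ k ∈ range b, (k : ℤ) ^ 2) by
      linear_combination -(a ^ 2 + 1) * six_mul_sum_range_sq ℤ b]
    exact dvd_sub (dvd_mul_of_dvd_right h a)
      (dvd_mul_of_dvd_right (sq_dvd_two_mul_crossSum_sub hb ha) 6)
  rw [sq, mul_dvd_mul_iff_left hb'] at hsq
  rw [show a ^ 2 + 1 = (a ^ 2 + 1) * ((b - 1) * (2 * b - 1)) - b * ((a ^ 2 + 1) * (2 * b - 3)) by
    ring]
  exact dvd_sub hsq (dvd_mul_right _ _)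

lemma four_mul_crossSum_of_dvd_sq_add_one (hb : 0 < b) (h : (b : ℤ) ∣ a ^ 2 + 1) :
    4 * crossSum a b = b ^ 2 * (b - 1) := by
  have ha : IsCoprime a b := by
    obtain ⟨w, hw⟩ := h
    exact ⟨-a, w, by linear_combination -hw⟩
  have hinv : ∀ k ∈ range b, (a * k % b) * (a * (a * k % b) % b) = (a * k % b) * (b - k) := by
    intro k hk
    rcases Nat.eq_zero_or_pos k with rfl | hk0
    · simp
    have hkb := mem_range.1 hk
    have hmod : a * (a * k % b) ≡ b - k [ZMOD b] :=
      calc a * (a * k % b) ≡ a * (a * k) [ZMOD b] := (Int.mod_modEq _ _).mul_left _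
        _ = (a ^ 2 + 1) * k - k := by ring
        _ ≡ 0 * k - k [ZMOD b] := ((Int.modEq_zero_iff_dvd.2 h).mul_right _).sub_right _
        _ ≡ b - k [ZMOD b] := Int.modEq_iff_dvd.2 ⟨1, by ring⟩
    rw [Eq.trans hmod (Int.emod_eq_of_lt (by omega) (by omega))]
  have hperm : ∑ k ∈ range b, a * k % b = ∑ k ∈ range b, (k : ℤ) :=
    sum_range_comp_mul_emod hb ha id
  have hreindex : ∑ k ∈ range b, (a * k % b) * (b - k) = crossSum a b := by
    rw [← sum_congr rfl hinv]
    exact sum_range_comp_mul_emod hb ha (fun r => r * (a * r % b))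
  have hexpand : ∑ k ∈ range b, (a * k % b) * (b - k)
      = b * ∑ k ∈ range b, a * k % b - crossSum a b := by
    rw [crossSum, mul_sum, ← sum_sub_distrib]
    exact sum_congr rfl fun k _ => by ring
  linear_combination -2 * hreindex + 2 * hexpand + 2 * b * hperm + b * two_mul_sum_range_id ℤ b

theorem stmt_0 (a : ℤ) (b : ℕ) (hb : 0 < b) (hab : Int.gcd a b = 1) :
    ((∃ m : ℤ, S a b = (m : ℚ)) ↔ (b : ℤ) ∣ a ^ 2 + 1) ∧
    ((b : ℤ) ∣ a ^ 2 + 1 → S a b = 0) := by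
  have ha : IsCoprime a b := Int.isCoprime_iff_gcd_eq_one.mpr hab
  have hS := sq_mul_S_eq hb ha
  have hzero : (b : ℤ) ∣ a ^ 2 + 1 → S a b = 0 := fun h => by
    rw [four_mul_crossSum_of_dvd_sq_add_one hb h, sub_self, mul_zero, Int.cast_zero] at hS
    exact (mul_eq_zero.1 hS).resolve_left (by positivity)
  refine ⟨⟨fun ⟨m, hm⟩ => dvd_sq_add_one_of_sq_dvd_crossSum hb ha ⟨m + 3 * (b - 1), ?_⟩,
    fun h => ⟨0, by simp [hzero h]⟩⟩, hzero⟩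
  rw [hm] at hS
  have hT : ((b : ℤ) ^ 2 * m : ℤ) = 3 * (4 * crossSum a b - b ^ 2 * (b - 1)) := by
    exact_mod_cast hS
  linear_combination -hT
end

section
/- For integers a, b with gcd(a,b)=1 and a,b ≥ 1, the normalized Dedekind sums satisfy the reciprocity law S(a,b) + S(b,a) = a/b + b/a + 1/(ab) - 3. -/
/-!
Write `P(a, b) = ∑_{k<b} k · (a k mod b)`. Since `k ↦ a k mod b` permutes `{0, …, b-1}`, the
Dedekind sum is `s(a, b) = P(a, b) / b² - (b - 1) / 4`, and, through
`a k = b ⌊a k / b⌋ + (a k mod b)`, the first two moments of the quotients `⌊a k / b⌋` are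
expressed by `P(a, b)`. Counting the lattice points below the diagonal of the `b × a` rectangle by
columns and by rows ties the quotients of `(a, b)` to those of `(b, a)`; eliminating the quotients
gives `12 (a² P(a, b) + b² P(b, a)) = a b (a² + b² + 1 + 3 a b (a + b - 3))`, which is the
reciprocity law.
-/

open Finset

theorem sum_range_natCast (n : ℕ) : ∑ k ∈ range n, (k : ℚ) = n * (n - 1) / 2 := by
  induction n with
  | zero => simp
  | succ n ih => rw [sum_range_succ, ih]; push_cast; ring

theorem sum_range_natCast_sq (n : ℕ) :
    ∑ k ∈ range n, (k : ℚ) ^ 2 = n * (n - 1) * (2 * n - 1) / 6 := by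
  induction n with
  | zero => simp
  | succ n ih => rw [sum_range_succ, ih]; push_cast; ring

theorem natCast_mul_div (m n : ℕ) : (n : ℚ) * (m / n : ℕ) = m - (m % n : ℕ) := by
  rw [eq_sub_iff_add_eq]
  exact_mod_cast Nat.div_add_mod m n

theorem sum_range_mul_div (a b : ℕ) :
    (b : ℚ) * ∑ k ∈ range b, (k : ℚ) * (a * k / b : ℕ) =
      a * ∑ k ∈ range b, (k : ℚ) ^ 2 - ∑ k ∈ range b, (k : ℚ) * (a * k % b : ℕ) := by
  rw [mul_sum, mul_sum, ← sum_sub_distrib]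
  refine sum_congr rfl fun k _ => ?_
  rw [mul_left_comm, natCast_mul_div]
  push_cast
  ring

namespace Nat.Coprime

variable {a b : ℕ}

theorem mul_mod_ne_zero {k : ℕ} (hab : a.Coprime b) (hk : 0 < k) (hkb : k < b) :
    a * k % b ≠ 0 := fun h =>
  Nat.not_dvd_of_pos_of_lt hk hkb (hab.symm.dvd_of_dvd_mul_left (Nat.dvd_of_mod_eq_zero h))

theorem sum_range_mul_mod {M : Type*} [AddCommMonoid M] (hab : a.Coprime b) (f : ℕ → M) :
    ∑ x ∈ range b, f (a * x % b) = ∑ x ∈ range b, f x := by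
  rcases b.eq_zero_or_pos with rfl | hb
  · simp
  have hmaps : Set.MapsTo (fun x => a * x % b) (range b) (range b) :=
    fun x _ => mem_range.2 (Nat.mod_lt _ hb)
  have hinj : Set.InjOn (fun x => a * x % b) (range b) := by
    intro x hx y hy hxy
    have := Nat.ModEq.cancel_left_of_coprime hab.symm hxy
    rwa [Nat.ModEq, Nat.mod_eq_of_lt (mem_range.1 hx), Nat.mod_eq_of_lt (mem_range.1 hy)] at this
  exact sum_nbij _ hmaps hinj (surjOn_of_injOn_of_card_le _ hmaps hinj le_rfl) fun _ _ => rfl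

theorem filter_range_mul_lt_mul_eq_range (hab : a.Coprime b) {x : ℕ} (hx0 : 0 < x) (hx : x < b) :
    {y ∈ range a | b * y < a * x} = range (a * x / b + 1) := by
  have hne : ∀ y, b * y ≠ a * x := fun y h =>
    hab.mul_mod_ne_zero hx0 hx (by rw [← h, Nat.mul_mod_right])
  ext y
  simp only [mem_filter, mem_range, Nat.lt_succ_iff, Nat.le_div_iff_mul_le (hx0.trans hx)]
  constructor
  · rintro ⟨-, h⟩; linarith
  · intro h
    have hlt : b * y < a * x := lt_of_le_of_ne (by linarith) (hne y)
    exact ⟨by nlinarith, hlt⟩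

/- Both sides add up the weight `2 y` over the points `(x, y) ∈ [0, b) × [0, a)` with
`b y < a x`, summing over `y` for fixed `x` and over `x` for fixed `y`. Coprimality keeps the
points with `0 < x < b` off the line `b y = a x`. -/
theorem sum_range_div_mul_succ_add_sum_range (hab : a.Coprime b) :
    ∑ x ∈ range b, (a * x / b) * (a * x / b + 1) + ∑ y ∈ range a, 2 * y * (b * y / a + 1) =
      b * ∑ y ∈ range a, 2 * y := by
  have sum_over_y : ∀ x ∈ range b,
      ∑ y ∈ range a with b * y < a * x, 2 * y = (a * x / b) * (a * x / b + 1) := by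
    intro x hx
    rcases x.eq_zero_or_pos with rfl | hx0
    · simp
    rw [hab.filter_range_mul_lt_mul_eq_range hx0 (mem_range.1 hx), ← mul_sum, mul_comm,
      sum_range_id_mul_two, Nat.add_sub_cancel, mul_comm]
  have sum_over_x : ∀ y ∈ range a,
      ∑ x ∈ range b with b * y < a * x, 2 * y + 2 * y * (b * y / a + 1) = b * (2 * y) := by
    intro y hy
    rw [mem_range] at hy
    have ha : 0 < a := by omega
    rcases b.eq_zero_or_pos with rfl | hb
    · obtain rfl : a = 1 := (Nat.coprime_zero_right a).mp hab
      obtain rfl : y = 0 := by omega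
      simp
    have hfilter : {x ∈ range b | b * y < a * x} = Ioo (b * y / a) b := by
      ext x
      simp only [mem_filter, mem_range, mem_Ioo, Nat.div_lt_iff_lt_mul ha, mul_comm x a]
      exact and_comm
    have hq : b * y / a + 1 ≤ b := (Nat.div_lt_iff_lt_mul ha).2 (by nlinarith)
    rw [hfilter, sum_const, Nat.card_Ioo, smul_eq_mul, mul_comm (2 * y), ← add_mul, Nat.sub_sub,
      Nat.sub_add_cancel hq]
  calc _ = ∑ x ∈ range b, ∑ y ∈ range a with b * y < a * x, 2 * y
        + ∑ y ∈ range a, 2 * y * (b * y / a + 1) := by rw [sum_congr rfl sum_over_y]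
    _ = ∑ y ∈ range a, (∑ x ∈ range b with b * y < a * x, 2 * y + 2 * y * (b * y / a + 1)) := by
        rw [sum_add_distrib,
          sum_comm' (t' := range a) (s' := fun y => {x ∈ range b | b * y < a * x})]
        intro x y
        simp only [mem_filter]
        tauto
    _ = b * ∑ y ∈ range a, 2 * y := by rw [sum_congr rfl sum_over_x, mul_sum]

theorem sum_range_div (hab : a.Coprime b) :
    (b : ℚ) * ∑ k ∈ range b, ((a * k / b : ℕ) : ℚ) = (a - 1) * ∑ k ∈ range b, (k : ℚ) := by
  rw [mul_sum, sum_congr rfl fun k _ => natCast_mul_div (a * k) b, sum_sub_distrib,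
    hab.sum_range_mul_mod Nat.cast, sub_one_mul, mul_sum]
  push_cast
  rfl

theorem sum_range_div_sq (hab : a.Coprime b) :
    (b : ℚ) ^ 2 * ∑ k ∈ range b, ((a * k / b : ℕ) : ℚ) ^ 2 =
      (a ^ 2 + 1) * ∑ k ∈ range b, (k : ℚ) ^ 2
        - 2 * a * ∑ k ∈ range b, (k : ℚ) * (a * k % b : ℕ) := by
  have hsq : ∑ k ∈ range b, ((a * k % b : ℕ) : ℚ) ^ 2 = ∑ k ∈ range b, (k : ℚ) ^ 2 :=
    hab.sum_range_mul_mod fun k => (k : ℚ) ^ 2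
  calc (b : ℚ) ^ 2 * ∑ k ∈ range b, ((a * k / b : ℕ) : ℚ) ^ 2
      = ∑ k ∈ range b,
          ((a : ℚ) ^ 2 * k ^ 2 - 2 * a * (k * (a * k % b : ℕ)) + (a * k % b : ℕ) ^ 2) := by
        rw [mul_sum]
        refine sum_congr rfl fun k _ => ?_
        rw [← mul_pow, natCast_mul_div]
        push_cast
        ring
    _ = a ^ 2 * ∑ k ∈ range b, (k : ℚ) ^ 2 - 2 * a * ∑ k ∈ range b, (k : ℚ) * (a * k % b : ℕ)
          + ∑ k ∈ range b, ((a * k % b : ℕ) : ℚ) ^ 2 := by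
        rw [sum_add_distrib, sum_sub_distrib, ← mul_sum, ← mul_sum]
    _ = _ := by rw [hsq]; ring

theorem sum_range_mul_mul_mod_reciprocity (hab : a.Coprime b) :
    12 * (a ^ 2 * ∑ k ∈ range b, (k : ℚ) * (a * k % b : ℕ)
      + b ^ 2 * ∑ k ∈ range a, (k : ℚ) * (b * k % a : ℕ)) =
      a * b * (a ^ 2 + b ^ 2 + 1 + 3 * a * b * (a + b - 3)) := by
  have hlattice := congrArg (Nat.cast : ℕ → ℚ) (sum_range_div_mul_succ_add_sum_range hab)
  push_cast at hlattice
  have hsum_over_x : ∑ x ∈ range b, ((a * x / b : ℕ) : ℚ) * ((a * x / b : ℕ) + 1) =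
      ∑ x ∈ range b, ((a * x / b : ℕ) : ℚ) ^ 2 + ∑ x ∈ range b, ((a * x / b : ℕ) : ℚ) := by
    rw [← sum_add_distrib]; exact sum_congr rfl fun _ _ => by ring
  have hsum_over_y : ∑ y ∈ range a, 2 * (y : ℚ) * ((b * y / a : ℕ) + 1) =
      2 * ∑ y ∈ range a, (y : ℚ) * (b * y / a : ℕ) + 2 * ∑ y ∈ range a, (y : ℚ) := by
    rw [mul_sum, mul_sum, ← sum_add_distrib]; exact sum_congr rfl fun _ _ => by ring
  have hdiv := hab.sum_range_div
  have hdiv_sq := hab.sum_range_div_sq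
  have hmul_div := sum_range_mul_div b a
  rw [hsum_over_x, hsum_over_y, ← mul_sum] at hlattice
  simp only [sum_range_natCast, sum_range_natCast_sq] at hlattice hdiv hdiv_sq hmul_div
  linear_combination (-6 * a * b ^ 2) * hlattice + (6 * a * b) * hdiv + (6 * a) * hdiv_sq
    + (12 * b ^ 2) * hmul_div

end Nat.Coprime

theorem saw_of_fract_ne_zero {x : ℚ} (hx : Int.fract x ≠ 0) : saw x = Int.fract x - 1 / 2 := by
  rw [saw, if_neg, Int.self_sub_floor]
  intro hden
  rw [← (Rat.den_eq_one_iff x).1 hden, Int.fract_intCast] at hx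
  exact hx rfl

theorem saw_natCast_div {m n : ℕ} (hn : 0 < n) (h : m % n ≠ 0) :
    saw ((m : ℚ) / n) = (m % n : ℕ) / n - 1 / 2 := by
  have hfract : Int.fract ((m : ℚ) / n) = (m % n : ℕ) / n :=
    Int.fract_div_natCast_eq_div_natCast_mod
  rw [saw_of_fract_ne_zero (by rw [hfract]; exact div_ne_zero (Nat.cast_ne_zero.2 h) (by positivity)),
    hfract]

theorem sum_Icc_one_eq_sum_range {M : Type*} [AddCommMonoid M] {b : ℕ} (f : ℕ → M) (hb : 0 < b)
    (hf : f b = f 0) : ∑ k ∈ Icc 1 b, f k = ∑ k ∈ range b, f k := by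
  rw [← Ico_add_one_right_eq_Icc, sum_Ico_succ_top hb, range_eq_Ico, sum_eq_sum_Ico_succ_bot hb,
    hf, add_comm]

theorem Nat.Coprime.dedS_eq {a b : ℕ} (hb : 0 < b) (hab : a.Coprime b) :
    dedS a b = (∑ k ∈ range b, (k : ℚ) * (a * k % b : ℕ)) / b ^ 2 - (b - 1) / 4 := by
  have hb' : (b : ℚ) ≠ 0 := by positivity
  -- `saw 0 = 0`, while the formula valid for `0 < k < b` gives `1 / 4` at `k = 0`
  have hterm : ∀ k ∈ range b, saw ((k : ℚ) / b) * saw (((a : ℤ) : ℚ) * k / b) =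
      ((k : ℚ) / b - 1 / 2) * ((a * k % b : ℕ) / b - 1 / 2) - if k = 0 then 1 / 4 else 0 := by
    intro k hk
    rw [mem_range] at hk
    rcases k.eq_zero_or_pos with rfl | hk0
    · norm_num [saw]
    have hak : ((a : ℤ) : ℚ) * k / b = ((a * k : ℕ) : ℚ) / b := by push_cast; rfl
    have hkb : k % b = k := Nat.mod_eq_of_lt hk
    rw [if_neg hk0.ne', sub_zero, hak, saw_natCast_div hb (hab.mul_mod_ne_zero hk0 hk),
      saw_natCast_div hb (by rw [hkb]; exact hk0.ne'), hkb]
  have hexpand : ∀ k ∈ range b, ((k : ℚ) / b - 1 / 2) * ((a * k % b : ℕ) / b - 1 / 2) =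
      (k : ℚ) * (a * k % b : ℕ) / b ^ 2 - ((k : ℚ) / (2 * b) + (a * k % b : ℕ) / (2 * b)) + 1 / 4 :=
    fun k _ => by field_simp; ring
  rw [dedS, sum_Icc_one_eq_sum_range _ hb (by simp [div_self hb', saw]), sum_congr rfl hterm,
    sum_sub_distrib, sum_ite_eq' (range b) 0, if_pos (by simpa), sum_congr rfl hexpand,
    sum_add_distrib, sum_sub_distrib, sum_add_distrib, ← sum_div, ← sum_div, ← sum_div,
    hab.sum_range_mul_mod Nat.cast, sum_const, card_range, nsmul_eq_mul, sum_range_natCast]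
  field_simp
  ring

theorem stmt_4 (a b : ℕ) (ha : 1 ≤ a) (hb : 1 ≤ b) (hab : Nat.gcd a b = 1) :
    S (a : ℤ) b + S (b : ℤ) a = (a : ℚ) / b + (b : ℚ) / a + 1 / (a * b) - 3 := by
  have hrec := Nat.Coprime.sum_range_mul_mul_mod_reciprocity hab
  rw [S, S, Nat.Coprime.dedS_eq hb hab, Nat.Coprime.dedS_eq ha (Nat.Coprime.symm hab)]
  have ha' : (a : ℚ) ≠ 0 := by positivity
  have hb' : (b : ℚ) ≠ 0 := by positivity
  field_simp
  linear_combination 4 * hrec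
end

section
/- In the setting of the main theorem, b₃ = q(a₃²+1)/t₂, viewed as a function of r₁, is a polynomial in r₁ of degree 4 with leading coefficient n·q⁵. -/
open Polynomial

theorem mul_sq_add_one_div_eq {K : Type*} [Field K] {q n t m u : K} (ht : t ≠ 0)
    (hnt : n * t = m ^ 2 * q ^ 2 + 1) :
    q * ((u * t - m * q) ^ 2 + 1) / t = q * (u ^ 2 * t - 2 * q * m * u + n) := by
  rw [div_eq_iff ht]
  linear_combination (-q) * hnt

section
variable {K : Type*} [Field K] (q n r s : K)

noncomputable def t₂Poly : K[X] := C n⁻¹ * (C (q ^ 2) * (C n * X + C r) ^ 2 + 1)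

noncomputable def b₃Poly : K[X] :=
  C q * ((C q * X + C s) ^ 2 * t₂Poly q n r - C (2 * q) * (C n * X + C r) * (C q * X + C s) + C n)

variable {q n r s}

theorem degree_t₂Poly (hq : q ≠ 0) (hn : n ≠ 0) : (t₂Poly q n r).degree = 2 := by
  unfold t₂Poly; compute_degree!

theorem leadingCoeff_t₂Poly (hq : q ≠ 0) (hn : n ≠ 0) :
    (t₂Poly q n r).leadingCoeff = n * q ^ 2 := by
  have hsq : (C (q ^ 2) * (C n * X + C r) ^ 2).degree = 2 := by compute_degree!
  rw [t₂Poly, leadingCoeff_mul, leadingCoeff_C,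
    leadingCoeff_add_of_degree_lt' (by rw [hsq]; compute_degree!), leadingCoeff_mul,
    leadingCoeff_C, leadingCoeff_pow, leadingCoeff_linear hn]
  field_simp

theorem degree_b₃Poly (hq : q ≠ 0) (hn : n ≠ 0) : (b₃Poly q n r s).degree = 4 := by
  unfold b₃Poly t₂Poly; compute_degree!

theorem leadingCoeff_b₃Poly (hq : q ≠ 0) (hn : n ≠ 0) :
    (b₃Poly q n r s).leadingCoeff = n * q ^ 5 := by
  have hmain : ((C q * X + C s) ^ 2 * t₂Poly q n r).degree = 4 := by
    rw [degree_mul, degree_pow, degree_linear hq, degree_t₂Poly hq hn]; rfl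
  have hlow : (-(C (2 * q) * (C n * X + C r) * (C q * X + C s)) + C n).degree < 4 := by
    have : (-(C (2 * q) * (C n * X + C r) * (C q * X + C s)) + C n).degree ≤ 2 := by
      compute_degree
    exact this.trans_lt (by decide)
  rw [b₃Poly, leadingCoeff_mul, leadingCoeff_C, sub_eq_add_neg, add_assoc,
    leadingCoeff_add_of_degree_lt' (by rw [hmain]; exact hlow), leadingCoeff_mul, leadingCoeff_pow,
    leadingCoeff_linear hq, leadingCoeff_t₂Poly hq hn]
  ring

theorem eval_b₃Poly (hn : n ≠ 0) {x t : K} (hnt : n * t = (x * n + r) ^ 2 * q ^ 2 + 1)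
    (ht : t ≠ 0) :
    (b₃Poly q n r s).eval x = q * ((s * t + (x * t - x * n - r) * q) ^ 2 + 1) / t := by
  have ht₂Poly : (t₂Poly q n r).eval x = t := by
    simp only [t₂Poly, eval_mul, eval_add, eval_pow, eval_C, eval_X, eval_one]
    field_simp
    linear_combination -hnt
  rw [show s * t + (x * t - x * n - r) * q = (q * x + s) * t - (x * n + r) * q by ring,
    mul_sq_add_one_div_eq ht hnt]
  simp only [b₃Poly, eval_mul, eval_add, eval_sub, eval_pow, eval_C, eval_X, ht₂Poly]
  ring

end

theorem stmt_14_general (q r n : ℕ) (hq : 2 ≤ q) (hn : n ∣ r ^ 2 * q ^ 2 + 1)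
    (s : ℤ) :
    ∃ P : Polynomial ℚ, P.degree = 4 ∧ P.leadingCoeff = (n : ℚ) * q ^ 5 ∧
      ∀ r₁ : ℕ,
        (let t₂ : ℚ := (((r₁ : ℚ) * n + r) ^ 2 * q ^ 2 + 1) / n;
         let a₃ : ℚ := s * t₂ + ((r₁ : ℚ) * t₂ - r₁ * n - r) * q;
         q * (a₃ ^ 2 + 1) / t₂) = P.eval (r₁ : ℚ) := by
  have hn0 : (n : ℚ) ≠ 0 := Nat.cast_ne_zero.mpr (by rintro rfl; simp at hn)
  have hq0 : (q : ℚ) ≠ 0 := Nat.cast_ne_zero.mpr (by omega)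
  refine ⟨b₃Poly q n r s, degree_b₃Poly hq0 hn0, leadingCoeff_b₃Poly hq0 hn0,
    fun r₁ => (eval_b₃Poly hn0 (mul_div_cancel₀ _ hn0) ?_).symm⟩
  have : (0 : ℚ) < n := lt_of_le_of_ne (Nat.cast_nonneg n) hn0.symm
  positivity

theorem stmt_14 (q r n : ℕ) (hq : 2 ≤ q) (hn : n ∣ r ^ 2 * q ^ 2 + 1)
    (s : ℤ) (hs : Int.gcd s q = 1) :
    ∃ P : Polynomial ℚ, P.degree = 4 ∧ P.leadingCoeff = (n : ℚ) * q ^ 5 ∧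
      ∀ r₁ : ℕ,
        (let t₂ : ℚ := (((r₁ : ℚ) * n + r) ^ 2 * q ^ 2 + 1) / n;
         let a₃ : ℚ := s * t₂ + ((r₁ : ℚ) * t₂ - r₁ * n - r) * q;
         q * (a₃ ^ 2 + 1) / t₂) = P.eval (r₁ : ℚ) :=
  stmt_14_general q r n hq hn s
end
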